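/- The translation ρ of Q̃ sending (a, n) to (a, n + r_Q) is a quiver automorphism of Q̃, and the map π : Q̃ → Q sending (a, n) to a is a Galois covering of quivers with respect to the group generated by ρ: π is surjective on vertices, π∘g = π for all g in the group, any two vertices with the same image are in the same orbit, and π induces bijections on the sets of arrows starting (respectively ending) at each vertex. -/

import Mathlib

universe u v

/-- A walk in a quiver: a sequence of forward or backward traversals of arrows. -/
inductive QWalk {V : Type u} [Quiver.{v} V] : V → V → Type (max u v) where
  | nil {a : V} : QWalk a a
  | fwd {a b c : V} (w : QWalk a b) (e : b ⟶ c) : QWalk a c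
  | bwd {a b c : V} (w : QWalk a b) (e : c ⟶ b) : QWalk a c

namespace QWalk

/-- The degree of a walk: forward arrows count +1, backward arrows count -1. -/
def degree {V : Type u} [Quiver.{v} V] : {a b : V} → QWalk a b → ℤ
  | _, _, nil => 0
  | _, _, fwd w _ => degree w + 1
  | _, _, bwd w _ => degree w - 1

end QWalk

/-- A quiver is gradable if any two walks between the same pair of vertices
have the same degree. -/
def QuiverGradable (V : Type u) [Quiver.{v} V] : Prop :=
  ∀ ⦃a b : V⦄ (w w' : QWalk a b), w.degree = w'.degree

/-- A quiver is locally finite if there are only finitely many arrows between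
any two vertices and each vertex has finitely many neighbours. -/
def LocallyFiniteQuiver (V : Type u) [Quiver.{v} V] : Prop :=
  (∀ a b : V, Finite (a ⟶ b)) ∧
    ∀ a : V, {b : V | Nonempty (a ⟶ b) ∨ Nonempty (b ⟶ a)}.Finite
/-- The quiver `Q^ℤ`: vertices are pairs `(a, i)` with `a` a vertex of `Q` and `i : ℤ`;
arrows `(α, i) : (a, i) → (b, i + 1)` for each arrow `α : a → b` of `Q`. -/
def ZQuiver (V : Type u) [Quiver.{v} V] : Quiver.{max v 0} (V × ℤ) :=
  ⟨fun x y => (x.1 ⟶ y.1) × PLift (y.2 = x.2 + 1)⟩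
/-- Two vertices of `Q^ℤ` lie in the same connected component iff there is a walk
between them. -/
def ZConn (V : Type u) [Quiver.{v} V] (x y : V × ℤ) : Prop :=
  Nonempty (@QWalk (V × ℤ) (ZQuiver V) x y)

/-- `r` is the grading period of the quiver `Q`: it is `0` if `Q` is gradable, and
otherwise it is the minimal positive degree of a closed walk in `Q`. -/
def IsGradingPeriod (V : Type u) [Quiver.{v} V] (r : ℤ) : Prop :=
  (QuiverGradable V ∧ r = 0) ∨
    (¬ QuiverGradable V ∧ 0 < r ∧ (∃ (a : V) (w : QWalk a a), w.degree = r) ∧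
      ∀ (a : V) (w : QWalk a a), 0 < w.degree → r ≤ w.degree)

/-- The connected component `Q̃` of `Q^ℤ` containing a chosen base vertex. -/
abbrev ZComp (V : Type u) [Quiver.{v} V] (base : V × ℤ) : Type u :=
  {z : V × ℤ // ZConn V base z}

/-- The induced quiver structure on the connected component `Q̃`. -/
instance ZCompQuiver (V : Type u) [Quiver.{v} V] (base : V × ℤ) :
    Quiver (ZComp V base) :=
  ⟨fun x y => @Quiver.Hom _ (ZQuiver V) x.1 y.1⟩


/-! A walk in `Q^ℤ` projects to a walk in `Q` whose degree is the difference of the levels of its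
endpoints, and conversely every walk of `Q` lifts from any level. Hence `(a, i)` and `(a, j)` lie in
the same component exactly when some closed walk at `a` has degree `j - i`. When `Q` is connected,
the degrees of closed walks at any vertex are exactly the multiples of `r_Q`, so the fibre of `π`
over `a` in `Q̃` is a single orbit of the translation by `r_Q`. -/

namespace QWalk

variable {V : Type u} [Quiver.{v} V]

def comp : {a b c : V} → QWalk a b → QWalk b c → QWalk a c
  | _, _, _, w, nil => w
  | _, _, _, w, fwd v e => fwd (comp w v) e
  | _, _, _, w, bwd v e => bwd (comp w v) e

@[simp]
lemma degree_nil {a : V} : (nil : QWalk a a).degree = 0 := by simp [degree]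

@[simp]
lemma degree_comp : ∀ {a b c : V} (w : QWalk a b) (v : QWalk b c),
    (comp w v).degree = w.degree + v.degree
  | _, _, _, w, nil => by simp [comp]
  | _, _, _, w, fwd v e => by simp only [comp, degree, degree_comp w v]; ring
  | _, _, _, w, bwd v e => by simp only [comp, degree, degree_comp w v]; ring

def reverse : {a b : V} → QWalk a b → QWalk b a
  | _, _, nil => nil
  | _, _, fwd w e => comp (bwd nil e) (reverse w)
  | _, _, bwd w e => comp (fwd nil e) (reverse w)

@[simp]
lemma degree_reverse : ∀ {a b : V} (w : QWalk a b), w.reverse.degree = -w.degree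
  | _, _, nil => by simp [reverse]
  | _, _, fwd w e => by simp only [reverse, degree, degree_comp, degree_reverse w]; ring
  | _, _, bwd w e => by simp only [reverse, degree, degree_comp, degree_reverse w]; ring

lemma exists_degree_eq_mul {a : V} {w : QWalk a a} (k : ℤ) :
    ∃ w' : QWalk a a, w'.degree = k * w.degree := by
  induction k using Int.induction_on with
  | zero => exact ⟨nil, by simp⟩
  | succ k ih =>
    obtain ⟨w', hw'⟩ := ih
    exact ⟨w'.comp w, by rw [degree_comp, hw']; ring⟩
  | pred k ih =>
    obtain ⟨w', hw'⟩ := ih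
    exact ⟨w'.comp w.reverse, by rw [degree_comp, degree_reverse, hw']; ring⟩

end QWalk

section ZConn

variable {V : Type u} [Quiver.{v} V]

attribute [local instance] ZQuiver

lemma zConn_refl (x : V × ℤ) : ZConn V x x := ⟨.nil⟩

lemma ZConn.symm {x y : V × ℤ} (h : ZConn V x y) : ZConn V y x :=
  h.elim fun w => ⟨w.reverse⟩

lemma ZConn.trans {x y z : V × ℤ} (h : ZConn V x y) (h' : ZConn V y z) : ZConn V x z :=
  h.elim fun w => h'.elim fun w' => ⟨w.comp w'⟩

lemma zConn_lift : ∀ {a b : V} (w : QWalk a b) (i : ℤ), ZConn V (a, i) (b, i + w.degree)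
  | _, _, .nil, i => by simpa using zConn_refl _
  | _, _, .fwd w e, i => (zConn_lift w i).elim fun u =>
      ⟨u.fwd ⟨e, ⟨by simp only [QWalk.degree]; ring⟩⟩⟩
  | _, _, .bwd w e, i => (zConn_lift w i).elim fun u => by
      rw [QWalk.degree]
      exact ⟨u.bwd (c := (_, i + (w.degree - 1))) ⟨e, ⟨by ring⟩⟩⟩

lemma exists_degree_eq_of_walk : ∀ {x y : V × ℤ} (_ : @QWalk (V × ℤ) (ZQuiver V) x y),
    ∃ w : QWalk x.1 y.1, w.degree = y.2 - x.2
  | _, _, .nil => ⟨.nil, by simp⟩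
  | _, _, .fwd u e => by
    obtain ⟨w, hw⟩ := exists_degree_eq_of_walk u
    exact ⟨w.fwd e.1, by have := e.2.down; simp only [QWalk.degree]; omega⟩
  | _, _, .bwd u e => by
    obtain ⟨w, hw⟩ := exists_degree_eq_of_walk u
    exact ⟨w.bwd e.1, by have := e.2.down; simp only [QWalk.degree]; omega⟩

lemma zConn_iff {x y : V × ℤ} : ZConn V x y ↔ ∃ w : QWalk x.1 y.1, w.degree = y.2 - x.2 :=
  ⟨fun ⟨u⟩ => exists_degree_eq_of_walk u, fun ⟨w, hw⟩ => by
    simpa [hw] using zConn_lift w x.2⟩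

lemma zConn_add_mul {t : ℤ} (ht : ∀ a : V, ∃ w : QWalk a a, w.degree = t) (k : ℤ)
    (x : V × ℤ) : ZConn V x (x.1, x.2 + k * t) := by
  obtain ⟨c, rfl⟩ := ht x.1
  obtain ⟨w, hw⟩ := QWalk.exists_degree_eq_mul (w := c) k
  exact zConn_iff.2 ⟨w, by simp [hw]⟩

end ZConn

namespace IsGradingPeriod

variable {V : Type u} [Quiver.{v} V] (hconn : ∀ a b : V, Nonempty (QWalk a b)) {r : ℤ}
  (hr : IsGradingPeriod V r)
include hconn hr

lemma exists_closed_walk_degree_eq (a : V) : ∃ w : QWalk a a, w.degree = r := by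
  rcases hr with ⟨_, rfl⟩ | ⟨_, _, ⟨c, w, hw⟩, _⟩
  · exact ⟨.nil, by simp⟩
  · obtain ⟨u⟩ := hconn a c
    exact ⟨(u.comp w).comp u.reverse, by simp [hw]⟩

/-- Minimality of `r` forces the remainder of any closed degree modulo `r` to vanish. -/
lemma dvd_degree {a : V} (w : QWalk a a) : r ∣ w.degree := by
  obtain ⟨c, hc⟩ := exists_closed_walk_degree_eq hconn hr a
  obtain ⟨hgr, rfl⟩ | ⟨-, hpos, -, hmin⟩ := hr
  · simpa using hgr w .nil
  obtain ⟨w', hw'⟩ := QWalk.exists_degree_eq_mul (w := c) (-(w.degree / r))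
  have hrem : (w.comp w').degree = w.degree % r := by
    rw [QWalk.degree_comp, hw', hc, Int.emod_def]; ring
  have hlt : w.degree % r < r := Int.emod_lt_of_pos _ hpos
  refine Int.dvd_of_emod_eq_zero (le_antisymm ?_ (Int.emod_nonneg _ hpos.ne'))
  by_contra! h
  exact absurd (hmin a _ (hrem ▸ h)) (by omega)

end IsGradingPeriod

namespace ZComp

variable {V : Type u} [Quiver.{v} V] {base : V × ℤ}

attribute [local instance] ZQuiver

lemma exists_fst_eq (hconn : ∀ a b : V, Nonempty (QWalk a b)) (v : V) :
    ∃ z : ZComp V base, z.1.1 = v := by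
  obtain ⟨u⟩ := hconn base.1 v
  exact ⟨⟨_, zConn_lift u base.2⟩, rfl⟩

def translate (t : ℤ) (ht : ∀ a : V, ∃ w : QWalk a a, w.degree = t) :
    Equiv.Perm (ZComp V base) where
  toFun z := ⟨(z.1.1, z.1.2 + t), z.2.trans <| by simpa using zConn_add_mul ht 1 z.1⟩
  invFun z := ⟨(z.1.1, z.1.2 - t), z.2.trans <| by
    simpa [← sub_eq_add_neg] using zConn_add_mul ht (-1) z.1⟩
  left_inv z := by simp
  right_inv z := by simp

variable {t : ℤ} (ht : ∀ a : V, ∃ w : QWalk a a, w.degree = t)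

@[simp]
lemma translate_val (z : ZComp V base) : (translate t ht z).1 = (z.1.1, z.1.2 + t) := rfl

lemma translate_zpow_val (n : ℤ) (z : ZComp V base) :
    ((translate t ht ^ n) z).1 = (z.1.1, z.1.2 + n * t) := by
  induction n using Int.induction_on generalizing z with
  | zero => simp
  | succ n ih =>
    rw [zpow_add_one, Equiv.Perm.mul_apply, ih]
    simp only [translate_val, Prod.mk.injEq, true_and]; ring
  | pred n ih =>
    rw [zpow_sub_one, Equiv.Perm.mul_apply, ih]
    simp only [translate, Equiv.Perm.inv_def, Equiv.symm_mk, Equiv.coe_fn_mk, Prod.mk.injEq,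
      true_and]
    ring

lemma exists_translate_zpow_eq (hdvd : ∀ (a : V) (w : QWalk a a), t ∣ w.degree)
    {x y : ZComp V base} (hxy : x.1.1 = y.1.1) : ∃ n : ℤ, (translate t ht ^ n) x = y := by
  obtain ⟨⟨a, i⟩, hx⟩ := x
  obtain ⟨⟨b, j⟩, hy⟩ := y
  obtain rfl : a = b := hxy
  obtain ⟨w, hw⟩ := zConn_iff.1 (hx.symm.trans hy)
  obtain ⟨n, hn⟩ := hdvd a w
  refine ⟨n, Subtype.ext ?_⟩
  rw [translate_zpow_val, Prod.mk.injEq]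
  exact ⟨rfl, by simp only at hw ⊢; linarith⟩

def translateHomEquiv (x y : ZComp V base) :
    (x ⟶ y) ≃ (translate t ht x ⟶ translate t ht y) where
  toFun e := ⟨e.1, ⟨by simp only [translate_val, e.2.down]; ring⟩⟩
  invFun e := ⟨e.1, ⟨by have h := e.2.down; simp only [translate_val] at h; omega⟩⟩

lemma bijective_fst_outArrows (x : ZComp V base) :
    Function.Bijective fun e : Σ y : ZComp V base, (x ⟶ y) =>
      (⟨e.1.1.1, e.2.1⟩ : Σ w : V, (x.1.1 ⟶ w)) := by
  refine Function.bijective_iff_has_inverse.2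
    ⟨fun p => ⟨⟨(p.1, x.1.2 + 1), x.2.trans ⟨.fwd .nil ⟨p.2, ⟨rfl⟩⟩⟩⟩,
      ⟨p.2, ⟨rfl⟩⟩⟩,
      fun ⟨⟨⟨b, m⟩, _⟩, e⟩ => ?_, fun _ => rfl⟩
  obtain rfl : m = x.1.2 + 1 := e.2.down
  rfl

lemma bijective_fst_inArrows (x : ZComp V base) :
    Function.Bijective fun e : Σ y : ZComp V base, (y ⟶ x) =>
      (⟨e.1.1.1, e.2.1⟩ : Σ w : V, (w ⟶ x.1.1)) := by
  have hlevel : x.1.2 = x.1.2 - 1 + 1 := by ring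
  refine Function.bijective_iff_has_inverse.2
    ⟨fun p => ⟨⟨(p.1, x.1.2 - 1), x.2.trans ⟨.bwd .nil ⟨p.2, ⟨hlevel⟩⟩⟩⟩,
      ⟨p.2, ⟨hlevel⟩⟩⟩,
      fun ⟨⟨⟨b, m⟩, _⟩, e⟩ => ?_, fun _ => rfl⟩
  obtain rfl : m = x.1.2 - 1 := by have : x.1.2 = m + 1 := e.2.down; omega
  rfl

end ZComp

theorem translation_and_galois_covering_general (V : Type u) [Quiver.{v} V]
    (hconn : ∀ a b : V, Nonempty (QWalk a b))
    {r : ℤ} (hr : IsGradingPeriod V r) (base : V × ℤ) :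
    ∃ ρ : Equiv.Perm (ZComp V base),
      -- ρ is the translation (a, n) ↦ (a, n + r_Q)
      (∀ z : ZComp V base, ((ρ z).1 : V × ℤ) = (z.1.1, z.1.2 + r)) ∧
      -- ρ is a quiver automorphism: it induces bijections on arrow sets
      (∀ x y : ZComp V base, Nonempty ((x ⟶ y) ≃ (ρ x ⟶ ρ y))) ∧
      -- π is surjective on vertices
      (∀ v : V, ∃ z : ZComp V base, z.1.1 = v) ∧
      -- π ∘ g = π for every g = ρ^n in the group generated by ρ
      (∀ (n : ℤ) (z : ZComp V base), (((ρ ^ n : Equiv.Perm (ZComp V base)) z).1).1 = z.1.1) ∧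
      -- vertices with the same image under π lie in the same ⟨ρ⟩-orbit
      (∀ x y : ZComp V base, x.1.1 = y.1.1 →
        ∃ n : ℤ, (ρ ^ n : Equiv.Perm (ZComp V base)) x = y) ∧
      -- π induces a bijection on the arrows starting at each vertex
      (∀ x : ZComp V base, Function.Bijective
        (fun e : Σ y : ZComp V base, (x ⟶ y) =>
          (⟨e.1.1.1, e.2.1⟩ : Σ w : V, (x.1.1 ⟶ w)))) ∧
      -- π induces a bijection on the arrows ending at each vertex
      (∀ x : ZComp V base, Function.Bijective
        (fun e : Σ y : ZComp V base, (y ⟶ x) =>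
          (⟨e.1.1.1, e.2.1⟩ : Σ w : V, (w ⟶ x.1.1)))) := by
  have hρ := hr.exists_closed_walk_degree_eq hconn
  exact ⟨ZComp.translate r hρ, fun _ => rfl, fun x y => ⟨ZComp.translateHomEquiv hρ x y⟩,
    ZComp.exists_fst_eq hconn, fun n z => by rw [ZComp.translate_zpow_val],
    fun _ _ => ZComp.exists_translate_zpow_eq hρ fun _ => hr.dvd_degree hconn,
    ZComp.bijective_fst_outArrows, ZComp.bijective_fst_inArrows⟩

/-- The translation `ρ : (a, n) ↦ (a, n + r_Q)` is a quiver automorphism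
of `Q̃`, and `π : Q̃ → Q, (a, n) ↦ a` is a Galois covering with respect to the group
generated by `ρ`: `π` is surjective on vertices, `π ∘ g = π` for all `g` in the group,
two vertices with the same image lie in the same orbit, and `π` induces bijections on
the sets of arrows starting (resp. ending) at each vertex. -/
theorem translation_and_galois_covering (V : Type u) [Quiver.{v} V]
    (hconn : ∀ a b : V, Nonempty (QWalk a b)) (hlf : LocallyFiniteQuiver V)
    {r : ℤ} (hr : IsGradingPeriod V r) (base : V × ℤ) :
    ∃ ρ : Equiv.Perm (ZComp V base),
      -- ρ is the translation (a, n) ↦ (a, n + r_Q)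
      (∀ z : ZComp V base, ((ρ z).1 : V × ℤ) = (z.1.1, z.1.2 + r)) ∧
      -- ρ is a quiver automorphism: it induces bijections on arrow sets
      (∀ x y : ZComp V base, Nonempty ((x ⟶ y) ≃ (ρ x ⟶ ρ y))) ∧
      -- π is surjective on vertices
      (∀ v : V, ∃ z : ZComp V base, z.1.1 = v) ∧
      -- π ∘ g = π for every g = ρ^n in the group generated by ρ
      (∀ (n : ℤ) (z : ZComp V base), (((ρ ^ n : Equiv.Perm (ZComp V base)) z).1).1 = z.1.1) ∧
      -- vertices with the same image under π lie in the same ⟨ρ⟩-orbit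
      (∀ x y : ZComp V base, x.1.1 = y.1.1 →
        ∃ n : ℤ, (ρ ^ n : Equiv.Perm (ZComp V base)) x = y) ∧
      -- π induces a bijection on the arrows starting at each vertex
      (∀ x : ZComp V base, Function.Bijective
        (fun e : Σ y : ZComp V base, (x ⟶ y) =>
          (⟨e.1.1.1, e.2.1⟩ : Σ w : V, (x.1.1 ⟶ w)))) ∧
      -- π induces a bijection on the arrows ending at each vertex
      (∀ x : ZComp V base, Function.Bijective
        (fun e : Σ y : ZComp V base, (y ⟶ x) =>
          (⟨e.1.1.1, e.2.1⟩ : Σ w : V, (w ⟶ x.1.1)))) :=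
  translation_and_galois_covering_general V hconn hr base
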